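/- arXiv:2110.02161 — 5 statements merged into one kernel-verified Lean document; each statement's English description precedes it below -/
import Mathlib

section
/- Let N ≥ 2 be an integer and let M_1(N) = (m_{ij}) be the N × N matrix over ZMod N with m_{ij} = i + Σ_{l=1}^{j-i} (N − l + 1) (mod N) for 0 ≤ i ≤ j ≤ N−1 and m_{ij} = m_{ji} for i > j. Then for all 0 ≤ i, j, k ≤ N−1, the difference of entries satisfies m_{ik} − m_{jk} ≡ k(i − j) − (i − j)(i + j − 1)/2 (mod N), where (i − j)(i + j − 1)/2 is an integer since exactly one of i − j and i + j − 1 is even. -/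
/-- The `N × N` matrix `M_1(N)` over `ZMod N` with entries
`m_{ij} = i + Σ_{l=1}^{j-i} (N - l + 1) (mod N)` for `i ≤ j`, and `m_{ij} = m_{ji}` for `i > j`. -/
def M1 (N : ℕ) (i j : ℕ) : ZMod N :=
  if i ≤ j then ((i + ∑ l ∈ Finset.Icc 1 (j - i), (N - l + 1) : ℕ) : ZMod N)
  else ((j + ∑ l ∈ Finset.Icc 1 (i - j), (N - l + 1) : ℕ) : ZMod N)

lemma gaussT (d : ℕ) : 2 * (∑ l ∈ Finset.Icc 1 d, l) = d * (d + 1) := by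
  induction d with
  | zero => simp
  | succ n ih =>
    rw [Finset.sum_Icc_succ_top (by omega)]
    ring_nf
    ring_nf at ih
    omega

lemma M1_symm (N a b : ℕ) : M1 N a b = M1 N b a := by
  unfold M1
  split_ifs with h1 h2 h2
  · have : a = b := le_antisymm h1 h2
    subst this; rfl
  · rfl
  · rfl
  · omega

lemma M1_eq (N a b : ℕ) (hab : a ≤ b) (hb : b < N) :
    M1 N a b = (((b : ℤ) - ((∑ l ∈ Finset.Icc 1 (b - a), (l:ℤ)) : ℤ) : ℤ) : ZMod N) := by
  rw [M1, if_pos hab, Nat.cast_add, Nat.cast_sum]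
  have h1 : ∀ l ∈ Finset.Icc 1 (b - a), ((N - l + 1 : ℕ) : ZMod N) = 1 - (l : ℕ) := by
    intro l hl
    simp only [Finset.mem_Icc] at hl
    have : (N - l + 1 : ℕ) = N + 1 - l := by omega
    rw [this, Nat.cast_sub (by omega)]
    push_cast [ZMod.natCast_self]
    ring
  rw [Finset.sum_congr rfl h1, Finset.sum_sub_distrib]
  simp only [Finset.sum_const, Nat.card_Icc, nsmul_eq_mul, mul_one]
  have h2 : ((b - a : ℕ) : ZMod N) = (b : ZMod N) - a := by
    rw [Nat.cast_sub hab]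
  push_cast
  simp only [Nat.add_sub_cancel, h2]
  ring

theorem M1_entry_difference (N : ℕ) (hN : 2 ≤ N) (i j k : ℕ)
    (hi : i < N) (hj : j < N) (hk : k < N) :
    ∃ c : ℤ, 2 * c = ((i : ℤ) - j) * ((i : ℤ) + j - 1) ∧
      M1 N i k - M1 N j k = (((k : ℤ) * ((i : ℤ) - j) - c : ℤ) : ZMod N) := by
  have hev : Even (((i : ℤ) - j) * ((i : ℤ) + j - 1)) := by
    rcases Int.even_or_odd ((i : ℤ) - j) with h | h
    · exact h.mul_right _
    · refine Even.mul_left ?_ _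
      rw [Int.odd_iff] at h
      rw [Int.even_iff]
      omega
  obtain ⟨c, hc⟩ := hev
  refine ⟨c, by omega, ?_⟩
  have hc2 : 2 * c = ((i : ℤ) - j) * ((i : ℤ) + j - 1) := by omega
  rcases le_or_gt i k with hik | hik <;> rcases le_or_gt j k with hjk | hjk
  · rw [M1_eq N i k hik hk, M1_eq N j k hjk hk, ← Int.cast_sub]
    congr 1
    have g1 := gaussT (k - i); have g2 := gaussT (k - j)
    zify [hik] at g1; zify [hjk] at g2
    have h2 : (2 : ℤ) * (((k : ℤ) - (∑ l ∈ Finset.Icc 1 (k - i), (l:ℤ))) -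
        ((k : ℤ) - (∑ l ∈ Finset.Icc 1 (k - j), (l:ℤ))))
        = 2 * ((k : ℤ) * ((i : ℤ) - j) - c) := by linear_combination g2 - g1 + hc2
    linarith
  · rw [M1_eq N i k hik hk, M1_symm N j k, M1_eq N k j (le_of_lt hjk) hj, ← Int.cast_sub]
    congr 1
    have g1 := gaussT (k - i); have g2 := gaussT (j - k)
    zify [hik] at g1; zify [le_of_lt hjk] at g2
    have h2 : (2 : ℤ) * (((k : ℤ) - (∑ l ∈ Finset.Icc 1 (k - i), (l:ℤ))) -
        ((j : ℤ) - (∑ l ∈ Finset.Icc 1 (j - k), (l:ℤ))))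
        = 2 * ((k : ℤ) * ((i : ℤ) - j) - c) := by linear_combination g2 - g1 + hc2
    linarith
  · rw [M1_symm N i k, M1_eq N k i (le_of_lt hik) hi, M1_eq N j k hjk hk, ← Int.cast_sub]
    congr 1
    have g1 := gaussT (i - k); have g2 := gaussT (k - j)
    zify [le_of_lt hik] at g1; zify [hjk] at g2
    have h2 : (2 : ℤ) * (((i : ℤ) - (∑ l ∈ Finset.Icc 1 (i - k), (l:ℤ))) -
        ((k : ℤ) - (∑ l ∈ Finset.Icc 1 (k - j), (l:ℤ))))
        = 2 * ((k : ℤ) * ((i : ℤ) - j) - c) := by linear_combination g2 - g1 + hc2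
    linarith
  · rw [M1_symm N i k, M1_eq N k i (le_of_lt hik) hi, M1_symm N j k,
      M1_eq N k j (le_of_lt hjk) hj, ← Int.cast_sub]
    congr 1
    have g1 := gaussT (i - k); have g2 := gaussT (j - k)
    zify [le_of_lt hik] at g1; zify [le_of_lt hjk] at g2
    have h2 : (2 : ℤ) * (((i : ℤ) - (∑ l ∈ Finset.Icc 1 (i - k), (l:ℤ))) -
        ((j : ℤ) - (∑ l ∈ Finset.Icc 1 (j - k), (l:ℤ))))
        = 2 * ((k : ℤ) * ((i : ℤ) - j) - c) := by linear_combination g2 - g1 + hc2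
    linarith
end

section
/- Let N ≥ 3 be a prime and let M_1(N) = (m_{ij}) be the N × N matrix over ZMod N with m_{ij} = i + Σ_{l=1}^{j-i} (N − l + 1) (mod N) for 0 ≤ i ≤ j ≤ N−1 and m_{ij} = m_{ji} for i > j. Then for any two distinct row indices i ≠ j, the map k ↦ m_{ik} − m_{jk} (mod N) is a bijection of ZMod N (i.e., the modular difference vector of the two rows is a permutation of {0, 1, …, N−1}), and consequently the Hamming distance between rows i and j of M_1(N) equals N − 1. -/
lemma M1_sum_lemma (N d : ℕ) (hd : d ≤ N) :
    (2 : ZMod N) * ((∑ l ∈ Finset.Icc 1 d, (N - l + 1) : ℕ) : ZMod N)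
      = (d : ZMod N) - (d : ZMod N) ^ 2 := by
  induction d with
  | zero => simp
  | succ d ih =>
    rw [Finset.sum_Icc_succ_top (by omega : 1 ≤ d + 1), Nat.cast_add, mul_add, ih (by omega)]
    have h1 : N - (d + 1) + 1 = N - d := by omega
    have h2 : ((N - d : ℕ) : ZMod N) = -(d : ZMod N) := by
      rw [Nat.cast_sub (by omega), ZMod.natCast_self]; ring
    rw [h1, h2]
    push_cast
    ring

lemma two_mul_M1 (N a b : ℕ) (ha : a < N) (hb : b < N) :
    (2 : ZMod N) * M1 N a b = (a : ZMod N) + (b : ZMod N) - ((b : ZMod N) - (a : ZMod N)) ^ 2 := by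
  unfold M1
  split_ifs with h
  · rw [Nat.cast_add, mul_add, M1_sum_lemma N (b - a) (by omega), Nat.cast_sub h]
    ring
  · rw [Nat.cast_add, mul_add, M1_sum_lemma N (a - b) (by omega), Nat.cast_sub (by omega)]
    ring

theorem M1_rows_difference_bijective_and_hammingDist (N : ℕ) (hN : 3 ≤ N) (hNp : N.Prime)
    (i j : ℕ) (hi : i < N) (hj : j < N) (hij : i ≠ j) :
    Function.Bijective (fun k : ZMod N => M1 N i k.val - M1 N j k.val) ∧
    hammingDist (fun k : Fin N => M1 N i k) (fun k : Fin N => M1 N j k) = N - 1 := by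
  haveI : NeZero N := ⟨by omega⟩
  haveI : Fact N.Prime := ⟨hNp⟩
  set F : ZMod N → ZMod N := fun k => M1 N i k.val - M1 N j k.val with hF
  have h2 : (2 : ZMod N) ≠ 0 := by
    have : ((2 : ℕ) : ZMod N) ≠ 0 := by
      rw [Ne, ZMod.natCast_eq_zero_iff]
      intro h
      exact absurd (Nat.le_of_dvd (by norm_num) h) (by omega)
    simpa using this
  have hijz : (i : ZMod N) - (j : ZMod N) ≠ 0 := by
    rw [sub_ne_zero]
    intro h
    apply hij
    have := congrArg ZMod.val h
    rwa [ZMod.val_cast_of_lt hi, ZMod.val_cast_of_lt hj] at this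
  -- key formula
  have key : ∀ k : ZMod N, (2 : ZMod N) * F k
      = ((i : ZMod N) - j) * (1 - i - j + 2 * k) := by
    intro k
    have hk : k.val < N := ZMod.val_lt k
    have h1 := two_mul_M1 N i k.val hi hk
    have h2' := two_mul_M1 N j k.val hj hk
    have hkv : ((k.val : ℕ) : ZMod N) = k := by simp
    rw [hkv] at h1 h2'
    simp only [hF]
    linear_combination h1 - h2'
  have hinj : Function.Injective F := by
    intro k1 k2 hk
    have e1 := key k1
    have e2 := key k2
    rw [hk] at e1
    have : ((i : ZMod N) - j) * (1 - i - j + 2 * k1)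
        = ((i : ZMod N) - j) * (1 - i - j + 2 * k2) := by rw [← e1, ← e2]
    have h3 := mul_left_cancel₀ hijz this
    have h4 : (2 : ZMod N) * k1 = 2 * k2 := by linear_combination h3
    exact mul_left_cancel₀ h2 h4
  have hbij : Function.Bijective F := Finite.injective_iff_bijective.mp hinj
  refine ⟨hbij, ?_⟩
  -- Hamming distance part
  obtain ⟨k0, hk0⟩ := hbij.surjective 0
  have hfilter : (Finset.univ.filter fun k : ZMod N => F k ≠ 0) = Finset.univ.erase k0 := by
    ext k
    simp only [Finset.mem_filter, Finset.mem_univ, true_and, Finset.mem_erase, and_true]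
    rw [← hk0, hinj.ne_iff]
  have hcard : (Finset.univ.filter fun k : ZMod N => F k ≠ 0).card = N - 1 := by
    rw [hfilter, Finset.card_erase_of_mem (Finset.mem_univ _), Finset.card_univ, ZMod.card]
  rw [hammingDist]
  rw [← hcard]
  apply Finset.card_bij (fun (k : Fin N) _ => ((k : ℕ) : ZMod N))
  · intro k hk
    simp only [Finset.mem_filter, Finset.mem_univ, true_and] at hk ⊢
    have hv : (((k : ℕ) : ZMod N)).val = (k : ℕ) := ZMod.val_cast_of_lt k.isLt
    simp only [hF, hv]
    exact sub_ne_zero_of_ne hk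
  · intro k1 _ k2 _ h
    have := congrArg ZMod.val h
    rw [ZMod.val_cast_of_lt k1.isLt, ZMod.val_cast_of_lt k2.isLt] at this
    exact Fin.ext this
  · intro m hm
    simp only [Finset.mem_filter, Finset.mem_univ, true_and] at hm
    refine ⟨⟨m.val, ZMod.val_lt m⟩, ?_, ?_⟩
    · have hv : ((m.val : ℕ) : ZMod N) = m := by simp
      simp only [Finset.mem_filter, Finset.mem_univ, true_and]
      exact sub_ne_zero.mp hm
    · simp
end

section
/- Let N ≥ 3 be a prime, let M_1(N) = (m_{ij}) be the N × N matrix over ZMod N defined by m_{ij} = i + Σ_{l=1}^{j-i} (N − l + 1) (mod N) for i ≤ j and symmetry, and for s ∈ ZMod N let M_1(N)^{(s)} be the matrix with entries m_{ij} + s (mod N). Then for any s, t ∈ ZMod N and any two distinct indices i ≠ j, the map k ↦ (m_{ik} + s) − (m_{jk} + t) (mod N) is a bijection of ZMod N, so the modular difference vector of row i of M_1(N)^{(s)} and row j of M_1(N)^{(t)} is a permutation of {0, 1, …, N−1}, and the Hamming distance between these rows equals N − 1. -/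
open Finset Function

theorem hammingDist_eq_card_sub_one_of_bijective_sub {ι β : Type*} [Fintype ι] [AddGroup β]
    [DecidableEq β] {f g : ι → β} (h : Bijective (f - g)) :
    hammingDist f g = Fintype.card ι - 1 := by
  classical
  obtain ⟨k₀, hk₀⟩ := h.2 0
  have hne : ∀ k, f k ≠ g k ↔ k ≠ k₀ := fun k => sub_ne_zero.symm.trans (h.1.eq_iff' hk₀).not
  rw [hammingDist, filter_congr fun k _ => hne k, filter_ne', card_erase_of_mem (mem_univ k₀),
    card_univ]

namespace ZMod

theorem natCast_finVal_bijective (N : ℕ) [NeZero N] :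
    Bijective fun k : Fin N => ((k : ℕ) : ZMod N) := by
  refine (Fintype.bijective_iff_injective_and_card _).2 ⟨fun a b hab => Fin.ext ?_, by simp⟩
  simpa only [val_cast_of_lt a.isLt, val_cast_of_lt b.isLt] using congrArg val hab

theorem natCast_ne_natCast_of_lt {N i j : ℕ} (hi : i < N) (hj : j < N) (hij : i ≠ j) :
    (i : ZMod N) ≠ j := fun h => hij <| by
  simpa only [val_cast_of_lt hi, val_cast_of_lt hj] using congrArg val h

theorem two_ne_zero_of_three_le {N : ℕ} (hN : 3 ≤ N) : (2 : ZMod N) ≠ 0 := by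
  simpa using natCast_ne_natCast_of_lt (N := N) (i := 2) (j := 0) (by omega) (by omega) two_ne_zero

end ZMod

/-- Each term `N - l + 1` is `1 - l` modulo `N` only for `l ≤ N`, because of truncated
subtraction. -/
theorem two_mul_cast_sum_Icc_sub_add_one (N d : ℕ) (hd : d ≤ N) :
    (2 : ZMod N) * ((∑ l ∈ Icc 1 d, (N - l + 1) : ℕ) : ZMod N) = d - d ^ 2 := by
  induction d with
  | zero => simp
  | succ d ih =>
    have hterm : ((N - (d + 1) + 1 : ℕ) : ZMod N) = -d := by
      rw [show N - (d + 1) + 1 = N - d by omega, Nat.cast_sub (by omega), ZMod.natCast_self,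
        zero_sub]
    rw [sum_Icc_succ_top (by omega), Nat.cast_add, mul_add, ih (by omega), hterm]
    push_cast
    ring

theorem two_mul_M1_s5 {N i j : ℕ} (hi : i ≤ N) (hj : j ≤ N) :
    2 * M1 N i j = i + j - (j - i) ^ 2 := by
  unfold M1
  split_ifs with h
  · rw [Nat.cast_add, mul_add, two_mul_cast_sum_Icc_sub_add_one N _ (by omega), Nat.cast_sub h]
    ring
  · rw [Nat.cast_add, mul_add, two_mul_cast_sum_Icc_sub_add_one N _ (by omega),
      Nat.cast_sub (by omega)]
    ring

theorem M1_sub_M1 {N i j k : ℕ} [Fact N.Prime] (h2 : (2 : ZMod N) ≠ 0) (hi : i ≤ N) (hj : j ≤ N)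
    (hk : k ≤ N) : M1 N i k - M1 N j k = (i - j) * k + (i - j) * (1 - i - j) / 2 := by
  apply mul_left_cancel₀ h2
  rw [mul_sub, two_mul_M1_s5 hi hk, two_mul_M1_s5 hj hk]
  field_simp
  ring

theorem M1_shift_distinct_rows_difference_bijective (N : ℕ) (hN : 3 ≤ N) (hNp : N.Prime)
    (s t : ZMod N) (i j : ℕ) (hi : i < N) (hj : j < N) (hij : i ≠ j) :
    Function.Bijective (fun k : ZMod N => (M1 N i k.val + s) - (M1 N j k.val + t)) ∧
    hammingDist (fun k : Fin N => M1 N i k + s) (fun k : Fin N => M1 N j k + t) = N - 1 := by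
  have : NeZero N := ⟨by omega⟩
  have : Fact N.Prime := ⟨hNp⟩
  set F : ZMod N → ZMod N := fun x => (i - j) * x + ((i - j) * (1 - i - j) / 2 + (s - t))
  have hF : Bijective F := (Equiv.addRight _).bijective.comp
    (mulLeft_bijective₀ _ (sub_ne_zero.2 (ZMod.natCast_ne_natCast_of_lt hi hj hij)))
  have hrow : ∀ k ≤ N, (M1 N i k + s) - (M1 N j k + t) = F k := fun k hk => by
    rw [add_sub_add_comm, M1_sub_M1 (ZMod.two_ne_zero_of_three_le hN) hi.le hj.le hk, add_assoc]
  constructor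
  · convert hF using 1
    funext k
    rw [hrow _ k.val_lt.le, ZMod.natCast_zmod_val]
  · convert hammingDist_eq_card_sub_one_of_bijective_sub
      (f := fun k : Fin N => M1 N i k + s) (g := fun k : Fin N => M1 N j k + t) ?_
    · simp
    · convert hF.comp (ZMod.natCast_finVal_bijective N) using 1
      funext k
      exact hrow _ k.isLt.le
end

section
/- Let N ≥ 3 be a prime and let M_1(N) = (m_{ij}) be the N × N matrix over ZMod N defined by m_{ij} = i + Σ_{l=1}^{j-i} (N − l + 1) (mod N) for 0 ≤ i ≤ j ≤ N−1 and m_{ij} = m_{ji} for i > j. Then no two distinct rows of M_1(N) are N-ary complements, and no two distinct columns of M_1(N) are N-ary complements. -/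
/-- Two vectors `x, y` with entries in `ZMod N` are `N`-ary complements if there is a
permutation `f` of `ZMod N` with `f (x i) = y i` for all `i` and `f (x i) ≠ x i` for some `i`. -/
def NaryComplement (N : ℕ) {n : ℕ} (x y : Fin n → ZMod N) : Prop :=
  ∃ f : Equiv.Perm (ZMod N), (∀ i, f (x i) = y i) ∧ ∃ i, f (x i) ≠ x i

lemma M1_symm_s9 (N i k : ℕ) : M1 N i k = M1 N k i := by
  unfold M1
  rcases lt_trichotomy i k with h | h | h
  · rw [if_pos h.le, if_neg (not_le.mpr h)]
  · subst h; rfl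
  · rw [if_neg (not_le.mpr h), if_pos h.le]

lemma sum_aux (N : ℕ) : ∀ d : ℕ, d ≤ N →
    (2 : ZMod N) * ∑ l ∈ Finset.Icc 1 d, ((N - l + 1 : ℕ) : ZMod N) =
      (d : ZMod N) - (d : ZMod N) ^ 2 := by
  intro d
  induction d with
  | zero => simp
  | succ n ih =>
    intro hd
    rw [Finset.sum_Icc_succ_top (by omega : 1 ≤ n + 1)]
    have hcast : ((N - (n + 1) + 1 : ℕ) : ZMod N) = -(n : ZMod N) := by
      have h1 : N - (n + 1) + 1 = N - n := by omega
      rw [h1, Nat.cast_sub (by omega)]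
      simp
    rw [mul_add, ih (by omega), hcast]
    push_cast
    ring

lemma M1_eq_s9 (N : ℕ) {i k : ℕ} (hi : i < N) (hk : k < N) :
    (2 : ZMod N) * M1 N i k = (i : ZMod N) + k - ((i : ZMod N) - k) ^ 2 := by
  rcases le_or_gt i k with h | h
  · unfold M1
    rw [if_pos h, Nat.cast_add, mul_add, Nat.cast_sum, sum_aux N (k - i) (by omega),
      Nat.cast_sub h]
    ring
  · unfold M1
    rw [if_neg (not_le.mpr h), Nat.cast_add, mul_add, Nat.cast_sum,
      sum_aux N (i - k) (by omega), Nat.cast_sub h.le]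
    ring

lemma M1_no_comp_rows (N : ℕ) (hN : 3 ≤ N) (hNp : N.Prime)
    (i j : Fin N) (hij : i ≠ j) :
    ¬ NaryComplement N (fun k : Fin N => M1 N i k) (fun k : Fin N => M1 N j k) := by
  haveI : Fact N.Prime := ⟨hNp⟩
  have h2 : (2 : ZMod N) ≠ 0 := by
    intro h
    have := (ZMod.natCast_eq_zero_iff 2 N).mp (by exact_mod_cast h)
    have := Nat.le_of_dvd (by norm_num) this
    omega
  rintro ⟨f, hf, -⟩
  -- choose a with 2a ≠ 2i+1
  obtain ⟨a, ha⟩ : ∃ a : ZMod N, 2 * a ≠ 2 * (i : ZMod N) + 1 := by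
    by_contra hc
    push_neg at hc
    have h0 := hc 0
    have h1 := hc 1
    rw [mul_zero] at h0
    rw [mul_one] at h1
    exact h2 (by rw [h1, ← h0])
  set b : ZMod N := 2 * (i : ZMod N) + 1 - a with hb
  let k : Fin N := ⟨a.val, ZMod.val_lt a⟩
  let k' : Fin N := ⟨b.val, ZMod.val_lt b⟩
  have hka : ((k : ℕ) : ZMod N) = a := ZMod.natCast_rightInverse a
  have hkb : ((k' : ℕ) : ZMod N) = b := ZMod.natCast_rightInverse b
  -- row i takes equal values at k and k'
  have hx : M1 N i k = M1 N i k' := by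
    apply mul_left_cancel₀ h2
    rw [M1_eq_s9 N i.isLt k.isLt, M1_eq_s9 N i.isLt k'.isLt, hka, hkb, hb]
    ring
  have hy : M1 N j k = M1 N j k' := by
    have h1 := hf k
    have h2 := hf k'
    simp only at h1 h2
    rw [← h1, ← h2, hx]
  have hy2 : (j : ZMod N) + a - ((j : ZMod N) - a) ^ 2
      = (j : ZMod N) + b - ((j : ZMod N) - b) ^ 2 := by
    have := congrArg (fun z => (2 : ZMod N) * z) hy
    simpa only [M1_eq_s9 N j.isLt k.isLt, M1_eq_s9 N j.isLt k'.isLt, hka, hkb] using this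
  have hfac : (a - b) * (1 + 2 * (j : ZMod N) - a - b) = 0 := by
    linear_combination hy2
  have hab : a - b ≠ 0 := by
    rw [hb]
    intro h
    apply ha
    linear_combination h
  have hsec := (mul_eq_zero.mp hfac).resolve_left hab
  -- deduce i = j
  have hji : (2 : ZMod N) * (j : ZMod N) = 2 * (i : ZMod N) := by
    rw [hb] at hsec
    linear_combination hsec
  have hij' : ((j : ℕ) : ZMod N) = ((i : ℕ) : ZMod N) := mul_left_cancel₀ h2 hji
  apply hij
  have := (ZMod.natCast_eq_natCast_iff' _ _ _).mp hij'
  rw [Nat.mod_eq_of_lt j.isLt, Nat.mod_eq_of_lt i.isLt] at this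
  exact (Fin.ext this).symm

theorem M1_no_complementary_rows_or_cols (N : ℕ) (hN : 3 ≤ N) (hNp : N.Prime)
    (i j : Fin N) (hij : i ≠ j) :
    ¬ NaryComplement N (fun k : Fin N => M1 N i k) (fun k : Fin N => M1 N j k) ∧
    ¬ NaryComplement N (fun k : Fin N => M1 N k i) (fun k : Fin N => M1 N k j) := by
  refine ⟨M1_no_comp_rows N hN hNp i j hij, ?_⟩
  have e1 : (fun k : Fin N => M1 N k i) = (fun k : Fin N => M1 N i k) := by
    funext k; exact M1_symm_s9 N k i
  have e2 : (fun k : Fin N => M1 N k j) = (fun k : Fin N => M1 N j k) := by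
    funext k; exact M1_symm_s9 N k j
  rw [e1, e2]
  exact M1_no_comp_rows N hN hNp i j hij
end

section
/- Let N ≥ 3 be a prime and let M_k(N) be the N^k × N^k matrices over ZMod N defined recursively as above. Then for every k ≥ 1, M_k(N) has multiplicity N^{k−1}: for any two distinct rows u, v of M_k(N) and every a ∈ ZMod N, the number of column indices i with u_i − v_i = a (mod N) equals exactly N^{k−1}. -/
/-- The recursively defined `N^k × N^k` matrices `M_k(N)`: the entry of `M_{k+1}(N)` at
position `(i·N^k + p, j·N^k + q)` is `M_k(N)_{pq} + M_1(N)_{ij}`; the base case `k = 0` is the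
`1 × 1` zero matrix, so that `M_1(N)` is recovered at `k = 1`. -/
def Mk (N : ℕ) : ℕ → ℕ → ℕ → ZMod N
  | 0, _, _ => 0
  | k + 1, a, b => Mk N k (a % N ^ k) (b % N ^ k) + M1 N (a / N ^ k) (b / N ^ k)

/-! In `ZMod N`, twice the entry `(i, t)` of `M_1(N)` is `i + t - (i - t) ^ 2`, so the difference of
rows `I ≠ J` of `M_1(N)` is affine in `t` with slope `2 (I - J)`; for an odd prime `N` it takes
every value exactly once. In `M_{k+1}(N)` rows `(I, P)` and `(J, Q)` differ at column `(u, v)` by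
`M_k(N)_{Pv} - M_k(N)_{Qv} + M_1(N)_{Iu} - M_1(N)_{Ju}`: if `P ≠ Q`, induction applies for each
fixed `u`; if `P = Q`, the difference does not depend on `v` and the case of `M_1(N)` applies. -/

open Finset

lemma card_filter_eq_one_of_bijective {α β : Type*} [Fintype α] [DecidableEq β] {f : α → β}
    (hf : Function.Bijective f) (b : β) : #{x | f x = b} = 1 := by
  obtain ⟨x, hx, huniq⟩ := hf.existsUnique b
  exact card_eq_one.mpr ⟨x, by ext y; simpa using ⟨huniq y, fun h => h ▸ hx⟩⟩

section M1

variable {N : ℕ}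

lemma cast_sum_Icc_mul_two {d : ℕ} (hd : d ≤ N) :
    ((∑ l ∈ Icc 1 d, (N - l + 1) : ℕ) : ZMod N) * 2 = d - (d : ZMod N) ^ 2 := by
  induction d with
  | zero => simp
  | succ d ih =>
    rw [sum_Icc_succ_top (by omega), Nat.cast_add, add_mul, ih (by omega),
      show N - (d + 1) + 1 = N - d by omega, Nat.cast_sub (by omega), ZMod.natCast_self]
    push_cast
    ring

lemma M1_mul_two {i t : ℕ} (hi : i ≤ N) (ht : t ≤ N) :
    M1 N i t * 2 = i + t - ((i : ZMod N) - t) ^ 2 := by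
  unfold M1
  split_ifs with h
  · rw [Nat.cast_add, add_mul, cast_sum_Icc_mul_two (by omega), Nat.cast_sub h]
    ring
  · rw [Nat.cast_add, add_mul, cast_sum_Icc_mul_two (by omega), Nat.cast_sub (by omega)]
    ring

variable [Fact N.Prime]

lemma M1_sub_M1_injective (hN : N ≠ 2) {I J : Fin N} (hIJ : I ≠ J) :
    Function.Injective fun u : Fin N => M1 N I u - M1 N J u := by
  have cast_inj : Function.Injective fun u : Fin N => ((u : ℕ) : ZMod N) := fun u v h =>
    Fin.ext (by simpa [ZMod.natCast_eq_natCast_iff', Nat.mod_eq_of_lt] using h)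
  have htwo : (2 : ZMod N) ≠ 0 := Ring.two_ne_zero (by rwa [ZMod.ringChar_zmod_n])
  intro u v huv
  have h := congrArg (· * 2) huv
  simp only [sub_mul, M1_mul_two I.2.le u.2.le, M1_mul_two J.2.le u.2.le,
    M1_mul_two I.2.le v.2.le, M1_mul_two J.2.le v.2.le] at h
  have : 2 * (((I : ℕ) : ZMod N) - J) * ((u : ℕ) - (v : ℕ)) = 0 := by linear_combination h
  rcases mul_eq_zero.mp this with h | h
  · exact absurd (cast_inj (sub_eq_zero.mp ((mul_eq_zero.mp h).resolve_left htwo))) hIJ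
  · exact cast_inj (sub_eq_zero.mp h)

lemma card_filter_M1_sub_M1_eq (hN : N ≠ 2) {I J : Fin N} (hIJ : I ≠ J)
    (a : ZMod N) : #{u : Fin N | M1 N I u - M1 N J u = a} = 1 := by
  refine card_filter_eq_one_of_bijective ?_ a
  rw [Fintype.bijective_iff_injective_and_card, ZMod.card, Fintype.card_fin]
  exact ⟨M1_sub_M1_injective hN hIJ, rfl⟩

end M1

lemma card_filter_equiv_prod {α β γ : Type*} [Fintype α] [Fintype β] [Fintype γ]
    (e : α × β ≃ γ) (p : γ → Prop) [DecidablePred p] :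
    #{c | p c} = ∑ a, #{b | p (e (a, b))} := by
  simp only [card_filter]
  rw [← e.sum_comp, Fintype.sum_prod_type]

/-- `(u, v) ↦ u * N ^ k + v`: block index of `M_1(N)` and index inside the block `M_k(N)`. -/
def blockEquiv (N k : ℕ) : Fin N × Fin (N ^ k) ≃ Fin (N ^ (k + 1)) :=
  finProdFinEquiv.trans (finCongr (pow_succ' N k).symm)

lemma Mk_succ_blockEquiv (N k : ℕ) (I u : Fin N) (P v : Fin (N ^ k)) :
    Mk N (k + 1) (blockEquiv N k (I, P)) (blockEquiv N k (u, v)) = Mk N k P v + M1 N I u := by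
  have hpos : 0 < N ^ k := P.pos
  simp [blockEquiv, Mk, Nat.add_mul_div_left _ _ hpos, Nat.div_eq_of_lt, Nat.mod_eq_of_lt]

/-- Multiplying by `N` makes the count uniform in `k ≥ 0`: for `k = 0` there are no two distinct
rows, so the induction needs no separate base case. -/
lemma mul_card_filter_Mk_sub_Mk {N : ℕ} [Fact N.Prime] (hN : N ≠ 2) (k : ℕ) :
    ∀ i j : Fin (N ^ k), i ≠ j → ∀ a : ZMod N,
      N * #{t : Fin (N ^ k) | Mk N k i t - Mk N k j t = a} = N ^ k := by
  induction k with
  | zero =>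
    intro i j hij
    exact absurd (Subsingleton.elim (α := Fin 1) i j) hij
  | succ k ih =>
    intro i j hij a
    obtain ⟨⟨I, P⟩, rfl⟩ := (blockEquiv N k).surjective i
    obtain ⟨⟨J, Q⟩, rfl⟩ := (blockEquiv N k).surjective j
    rw [card_filter_equiv_prod (blockEquiv N k)]
    simp only [Mk_succ_blockEquiv]
    by_cases hPQ : P = Q
    · subst hPQ
      have hIJ : I ≠ J := by rintro rfl; exact hij rfl
      simp only [add_sub_add_left_eq_sub, filter_const, apply_ite card, card_univ,
        Fintype.card_fin, card_empty, ← sum_filter, sum_const, card_filter_M1_sub_M1_eq hN hIJ]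
      ring
    · simp only [add_sub_add_comm, ← eq_sub_iff_add_eq, mul_sum, ih P Q hPQ, sum_const,
        card_univ, Fintype.card_fin, smul_eq_mul]
      ring

theorem Mk_multiplicity (N : ℕ) (hN : 3 ≤ N) (hNp : N.Prime)
    (k : ℕ) (hk : 1 ≤ k) (i j : Fin (N ^ k)) (hij : i ≠ j) :
    ∀ a : ZMod N,
      (Finset.univ.filter fun t : Fin (N ^ k) => Mk N k i t - Mk N k j t = a).card
        = N ^ (k - 1) := by
  intro a
  have : Fact N.Prime := ⟨hNp⟩
  have hNk : N ^ k = N * N ^ (k - 1) := by rw [← pow_succ', Nat.sub_add_cancel hk]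
  exact Nat.eq_of_mul_eq_mul_left (by omega)
    ((mul_card_filter_Mk_sub_Mk (by omega) k i j hij a).trans hNk)
end
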